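/- For every natural number l ≥ 2, the system g₁ = 0, g₂ = 0 has at least two distinct solutions (z₁, z₂) ∈ ℝ² with z₁ > 0 and z₂ > 0. (These are singularities at infinity of the normalized Ricci flow on the generalized Wallach space SU(2l)/U(l).) -/
import Mathlib

set_option maxHeartbeats 1000000


/-- The first polynomial of the compactified normalized Ricci flow at infinity
for the generalized Wallach space SU(2l)/U(l). -/
noncomputable def g₁ (l z₁ z₂ : ℝ) : ℝ :=
  2 * (3 * l ^ 2 - 1) * z₁ * (l * (z₁ - 1) * (z₁ - 2 * z₂ + 1) + z₂ ^ 2)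

/-- The second polynomial of the compactified normalized Ricci flow at infinity
for the generalized Wallach space SU(2l)/U(l). -/
noncomputable def g₂ (l z₁ z₂ : ℝ) : ℝ :=
  (3 * l ^ 2 - 1) * z₂ * (2 * l * (-2 * z₁ * (z₂ - 1) + z₂ ^ 2 - 1) + z₁ ^ 2 + z₂ ^ 2 - 1)

/-- The auxiliary quartic obtained by eliminating `z₂`. -/
noncomputable def wQ (c x : ℝ) : ℝ :=
  (-(2*c^2+c-1)*x^2+4*c*x+(2*c^2-c-1))^2
    + 2*c*(x-1)*(2*c*((2*c-1)*x-(2*c+1)))*(-(2*c^2+c-1)*x^2+4*c*x+(2*c^2-c-1))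
    + c*(x^2-1)*(2*c*((2*c-1)*x-(2*c+1)))^2

lemma wQ_cont (c : ℝ) : Continuous (wQ c) := by
  unfold wQ; continuity

/-- From a root of the quartic with nonvanishing denominator we get a solution. -/
lemma root_gives_sol (c x : ℝ) (hE : 2*c*((2*c-1)*x-(2*c+1)) ≠ 0) (hQ : wQ c x = 0) :
    g₁ c x (-(-(2*c^2+c-1)*x^2+4*c*x+(2*c^2-c-1)) / (2*c*((2*c-1)*x-(2*c+1)))) = 0 ∧
    g₂ c x (-(-(2*c^2+c-1)*x^2+4*c*x+(2*c^2-c-1)) / (2*c*((2*c-1)*x-(2*c+1)))) = 0 := by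
  set E : ℝ := 2*c*((2*c-1)*x-(2*c+1)) with hEdef
  set F : ℝ := -(2*c^2+c-1)*x^2+4*c*x+(2*c^2-c-1) with hFdef
  set y : ℝ := -F / E with hydef
  have hy : E * y + F = 0 := by
    rw [hydef]; field_simp; ring
  have hQ' : F^2 + 2*c*(x-1)*E*F + c*(x^2-1)*E^2 = 0 := hQ
  have hA : (c*(x-1)*(x-2*y+1)+y^2) * E^2 = 0 := by
    linear_combination hQ' + (E*y - F + (-2*c*(x-1))*E) * hy
  have hA0 : c*(x-1)*(x-2*y+1)+y^2 = 0 :=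
    (mul_eq_zero.mp hA).resolve_right (pow_ne_zero 2 hE)
  constructor
  · unfold g₁; rw [hA0]; ring
  · unfold g₂
    have hB : 2*c*(-2*x*(y-1)+y^2-1)+x^2+y^2-1 = 0 := by
      linear_combination (2*c+1)*hA0 + hy
    rw [hB]; ring

theorem wallach_su2l_two_singularities (l : ℕ) (hl : 2 ≤ l) :
    ∃ p q : ℝ × ℝ, p ≠ q ∧
      (0 < p.1 ∧ 0 < p.2 ∧ g₁ (l : ℝ) p.1 p.2 = 0 ∧ g₂ (l : ℝ) p.1 p.2 = 0) ∧
      (0 < q.1 ∧ 0 < q.2 ∧ g₁ (l : ℝ) q.1 q.2 = 0 ∧ g₂ (l : ℝ) q.1 q.2 = 0) := by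
  set c : ℝ := (l : ℝ) with hc
  have hc2 : (2:ℝ) ≤ c := by rw [hc]; exact_mod_cast hl
  have hc0 : (0:ℝ) < c := by linarith
  -- first root in (0,1)
  have hQ0 : wQ c 0 < 0 := by
    have : wQ c 0 = -(2*c+1)^2*(c+1)*(3*c-1) := by unfold wQ; ring
    rw [this]
    have h1 : (0:ℝ) < (2*c+1)^2 := by positivity
    nlinarith [mul_pos (mul_pos h1 (by linarith : (0:ℝ) < c+1)) (by linarith : (0:ℝ) < 3*c-1)]
  have hQ1 : 0 < wQ c 1 := by
    have : wQ c 1 = 4*c^2 := by unfold wQ; ring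
    rw [this]; positivity
  obtain ⟨x₁, hx₁mem, hx₁⟩ : ∃ x ∈ Set.Ioo (0:ℝ) 1, wQ c x = 0 := by
    have h := intermediate_value_Ioo (le_of_lt one_pos) (wQ_cont c).continuousOn
    have h0 : (0:ℝ) ∈ Set.Ioo (wQ c 0) (wQ c 1) := ⟨hQ0, hQ1⟩
    obtain ⟨x, hx, hxe⟩ := h h0
    exact ⟨x, hx, hxe⟩
  obtain ⟨hx₁0, hx₁1⟩ := hx₁mem
  -- second root in (1+2/c, 10)
  have ha1 : (1:ℝ) + 2/c ≤ 10 := by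
    have : 2/c ≤ 1 := by rw [div_le_one hc0]; linarith
    linarith
  have hQa : 0 < wQ c (1 + 2/c) := by
    have hne : c ≠ 0 := ne_of_gt hc0
    have key : wQ c (1 + 2/c) = (4*c^6+16*c^5+16*c^4+80*c^3-96*c^2+16)/c^4 := by
      unfold wQ; field_simp; ring
    rw [key]
    have hnum : 0 < 4*c^6+16*c^5+16*c^4+80*c^3-96*c^2+16 := by nlinarith [sq_nonneg c, pow_pos hc0 3]
    positivity
  have hQb : wQ c 10 < 0 := by
    have : wQ c 10 = -78732*c^4+160380*c^3-74687*c^2-12078*c+9801 := by unfold wQ; ring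
    rw [this]
    nlinarith [sq_nonneg (c-2), mul_pos hc0 hc0, mul_pos (mul_pos hc0 hc0) hc0,
      mul_nonneg (mul_nonneg (sq_nonneg (c-2)) hc0.le) hc0.le,
      mul_nonneg (sq_nonneg (c-2)) hc0.le]
  obtain ⟨x₂, hx₂mem, hx₂⟩ : ∃ x ∈ Set.Ioo (1 + 2/c) (10:ℝ), wQ c x = 0 := by
    have h := intermediate_value_Ioo' ha1 (wQ_cont c).continuousOn
    have h0 : (0:ℝ) ∈ Set.Ioo (wQ c 10) (wQ c (1+2/c)) := ⟨hQb, hQa⟩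
    obtain ⟨x, hx, hxe⟩ := h h0
    exact ⟨x, hx, hxe⟩
  obtain ⟨hx₂a, hx₂b⟩ := hx₂mem
  have hx₂1 : (1:ℝ) < x₂ := by
    have : (0:ℝ) < 2/c := by positivity
    linarith
  -- signs of E and F at x₁
  have hE₁neg : 2*c*((2*c-1)*x₁-(2*c+1)) < 0 := by
    have ht : (2*c-1)*x₁-(2*c+1) < 0 := by
      have := mul_lt_mul_of_pos_left hx₁1 (show (0:ℝ) < 2*c-1 by linarith)
      linarith
    exact mul_neg_of_pos_of_neg (by linarith) ht
  have hF₁pos : 0 < -(2*c^2+c-1)*x₁^2+4*c*x₁+(2*c^2-c-1) := by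
    nlinarith [mul_nonneg (mul_nonneg (show (0:ℝ) ≤ 2*c^2+c-1 by nlinarith) hx₁0.le)
        (show (0:ℝ) ≤ 1-x₁ by linarith),
      mul_pos hc0 hx₁0,
      mul_nonneg (show (0:ℝ) ≤ 2*c^2-c-1 by nlinarith) (show (0:ℝ) ≤ 1-x₁ by linarith)]
  -- signs of E and F at x₂
  have hcx₂ : c + 2 < c * x₂ := by
    have h := mul_lt_mul_of_pos_left hx₂a hc0
    have h2 : c * (1 + 2/c) = c + 2 := by field_simp
    linarith
  have hE₂pos : 0 < 2*c*((2*c-1)*x₂-(2*c+1)) := by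
    have h1 := mul_lt_mul_of_pos_left hcx₂ (show (0:ℝ) < 2*c-1 by linarith)
    nlinarith [h1, mul_pos hc0 hc0]
  have hF₂neg : -(2*c^2+c-1)*x₂^2+4*c*x₂+(2*c^2-c-1) < 0 := by
    have hpos : (0:ℝ) < (2*c^2+c-1)*x₂ :=
      mul_pos (by nlinarith [mul_pos hc0 hc0]) (by linarith)
    have h1 := mul_lt_mul_of_pos_left hcx₂ hpos
    have h2 := mul_pos (show (0:ℝ) < x₂-1 by linarith)
      (show (0:ℝ) < 2*c^3+c^2+c-2 by nlinarith)
    have hcF : c * (-(2*c^2+c-1)*x₂^2+4*c*x₂+(2*c^2-c-1)) < 0 := by nlinarith [h1, h2]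
    nlinarith [hcF, hc0]
  -- build solutions
  have hE₁ : 2*c*((2*c-1)*x₁-(2*c+1)) ≠ 0 := ne_of_lt hE₁neg
  have hE₂ : 2*c*((2*c-1)*x₂-(2*c+1)) ≠ 0 := ne_of_gt hE₂pos
  obtain ⟨hg₁p, hg₂p⟩ := root_gives_sol c x₁ hE₁ hx₁
  obtain ⟨hg₁q, hg₂q⟩ := root_gives_sol c x₂ hE₂ hx₂
  refine ⟨(x₁, -(-(2*c^2+c-1)*x₁^2+4*c*x₁+(2*c^2-c-1)) / (2*c*((2*c-1)*x₁-(2*c+1)))),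
          (x₂, -(-(2*c^2+c-1)*x₂^2+4*c*x₂+(2*c^2-c-1)) / (2*c*((2*c-1)*x₂-(2*c+1)))),
          ?_, ⟨hx₁0, ?_, hg₁p, hg₂p⟩, ⟨by linarith, ?_, hg₁q, hg₂q⟩⟩
  · intro h
    have : x₁ = x₂ := congrArg Prod.fst h
    linarith
  · exact div_pos_of_neg_of_neg (by linarith) hE₁neg
  · apply div_pos (by linarith) hE₂pos
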